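/- arXiv:1904.00856 — 2 statements merged into one kernel-verified Lean document; each statement's English description precedes it below -/
import Mathlib

section
/- Let ε > 0 and let g : ℝ → ℝ² be continuously differentiable on an interval [0, L] with L ≥ ε. If ∫₀ᴸ (1/2)|g'(t)|² + (1/(4ε²))(1 − |g(t)|²)² dt ≤ N, then sup_{t ∈ [0,L]} (1 − |g(t)|)² ≤ C ε N for a universal constant C > 0. (One may take C = 8.) -/
open MeasureTheory Set
open scoped RealInnerProductSpace

private lemma stmt1_aux (x R d : ℝ) (h1 : x ≤ R) (h2 : R ≤ x + d)
    (hd : 0 < d) (hd1 : d ≤ 1) :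
    (1 - x)^2 ≤ (1 - R)^2 + 2*d*|1 - x| + d := by
  have h3 : 0 ≤ R - x := by linarith
  have h4 : R - x ≤ d := by linarith
  have ha := le_abs_self (1 - x)
  nlinarith [mul_le_mul_of_nonneg_left ha h3,
    mul_le_mul_of_nonneg_right h4 (abs_nonneg (1 - x)),
    sq_nonneg (R - x), abs_nonneg (1 - x)]

set_option maxHeartbeats 1000000 in
/-- one-dimensional trace estimate. -/
theorem stmt1 (ε L N : ℝ) (hε : 0 < ε) (hL : ε ≤ L)
    (g : ℝ → EuclideanSpace ℝ (Fin 2))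
    (hg : ContDiffOn ℝ 1 g (Set.Icc 0 L))
    (hN : ∫ t in (0:ℝ)..L,
        ((1 / 2) * ‖deriv g t‖ ^ 2 + (1 / (4 * ε ^ 2)) * (1 - ‖g t‖ ^ 2) ^ 2) ≤ N) :
    ∀ t ∈ Set.Icc (0:ℝ) L, (1 - ‖g t‖) ^ 2 ≤ 8 * ε * N := by
  have hL0 : 0 < L := hε.trans_le hL
  have hgc : ContinuousOn g (Icc 0 L) := hg.continuousOn
  set f := derivWithin g (Icc 0 L) with hfdef
  have hfc : ContinuousOn f (Icc 0 L) :=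
    hg.continuousOn_derivWithin (uniqueDiffOn_Icc hL0) le_rfl
  have hfeq : ∀ t ∈ Ioo 0 L, f t = deriv g t := fun t ht =>
    derivWithin_of_mem_nhds (Icc_mem_nhds ht.1 ht.2)
  have hder : ∀ t ∈ Ioo 0 L, HasDerivAt g (f t) t := by
    intro t ht
    have hmem : Icc 0 L ∈ nhds t := Icc_mem_nhds ht.1 ht.2
    have hd : DifferentiableAt ℝ g t :=
      ((hg.differentiableOn one_ne_zero) t (Ioo_subset_Icc_self ht)).differentiableAt hmem
    rw [hfeq t ht]
    exact hd.hasDerivAt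
  -- integrability helper
  have hII : ∀ {F : ℝ → ℝ}, ContinuousOn F (Icc 0 L) → IntervalIntegrable F volume 0 L := by
    intro F h
    apply ContinuousOn.intervalIntegrable
    rwa [uIcc_of_le hL0.le]
  have hne_ae : ∀ a : ℝ, ∀ᵐ (t : ℝ), t ≠ a := by
    intro a
    rw [MeasureTheory.ae_iff]
    have : {t : ℝ | ¬ t ≠ a} = {a} := by ext t; simp
    rw [this]
    exact Real.volume_singleton
  set E : ℝ → ℝ := fun t => (1/2) * ‖f t‖^2 + (1/(4*ε^2)) * (1 - ‖g t‖^2)^2 with hEdef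
  have hEc : ContinuousOn E (Icc 0 L) :=
    (continuousOn_const.mul ((hfc.norm).pow 2)).add
      (continuousOn_const.mul ((continuousOn_const.sub ((hgc.norm).pow 2)).pow 2))
  have hEi : IntervalIntegrable E volume 0 L := hII hEc
  have hEN : (∫ t in (0:ℝ)..L, E t) ≤ N := by
    have heq : (∫ t in (0:ℝ)..L, E t)
        = ∫ t in (0:ℝ)..L, ((1 / 2) * ‖deriv g t‖ ^ 2
            + (1 / (4 * ε ^ 2)) * (1 - ‖g t‖ ^ 2) ^ 2) := by
      apply intervalIntegral.integral_congr_ae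
      filter_upwards [hne_ae L] with t htL hmem
      rw [Set.uIoc_of_le hL0.le] at hmem
      have htIoo : t ∈ Ioo 0 L := ⟨hmem.1, lt_of_le_of_ne hmem.2 htL⟩
      rw [hEdef]
      simp only
      rw [hfeq t htIoo]
    rw [heq]; exact hN
  have hE0 : ∀ t, 0 ≤ E t := by
    intro t; rw [hEdef]; positivity
  have hN0 : 0 ≤ N :=
    le_trans (intervalIntegral.integral_nonneg hL0.le fun u _ => hE0 u) hEN
  set A := ∫ t in (0:ℝ)..L, |1 - ‖g t‖^2| with hAdef
  have habsc : ContinuousOn (fun t => |1 - ‖g t‖^2|) (Icc 0 L) :=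
    (continuousOn_const.sub ((hgc.norm).pow 2)).abs
  have hAi : IntervalIntegrable (fun t => |1 - ‖g t‖^2|) volume 0 L := hII habsc
  have hA0 : 0 ≤ A :=
    intervalIntegral.integral_nonneg hL0.le fun u _ => abs_nonneg _
  clear_value A
  -- main estimate at interior points
  have hmain : ∀ t₀ ∈ Ioo 0 L, (1 - ‖g t₀‖)^2 ≤ 8*ε*N := by
    intro t₀ ht₀
    set M : ℝ := (2/ε) * (2*A + L) + 2*|1 - ‖g t₀‖| + 1 with hMdef
    have hM0 : 0 ≤ M := by
      rw [hMdef]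
      have h1 : 0 ≤ (2/ε) * (2*A + L) := by
        apply mul_nonneg (by positivity)
        linarith
      have h2 : 0 ≤ |1 - ‖g t₀‖| := abs_nonneg _
      linarith
    clear_value M
    have key : ∀ δ : ℝ, 0 < δ → δ ≤ 1 → (1 - ‖g t₀‖)^2 ≤ 8*ε*N + δ * M := by
      intro δ hδ hδ1
      set r : ℝ → ℝ := fun t => Real.sqrt (‖g t‖^2 + δ^2) with hrdef
      have hrpos : ∀ t, 0 < r t := fun t => Real.sqrt_pos.2 (by positivity)
      have hrρ : ∀ t, ‖g t‖ ≤ r t := by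
        intro t
        rw [hrdef]
        simp only
        rw [Real.le_sqrt (norm_nonneg _) (by positivity)]
        nlinarith [sq_nonneg δ]
      have hrub : ∀ t, r t ≤ ‖g t‖ + δ := by
        intro t
        rw [hrdef]
        simp only
        calc Real.sqrt (‖g t‖^2 + δ^2) ≤ Real.sqrt ((‖g t‖ + δ)^2) :=
              Real.sqrt_le_sqrt (by nlinarith [norm_nonneg (g t), hδ.le])
          _ = ‖g t‖ + δ := Real.sqrt_sq (by positivity)
      have hrsq : ∀ t, r t ^ 2 = ‖g t‖^2 + δ^2 := fun t => Real.sq_sqrt (by positivity)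
      have hrc : ContinuousOn r (Icc 0 L) :=
        Real.continuous_sqrt.comp_continuousOn (((hgc.norm).pow 2).add continuousOn_const)
      set z : ℝ → ℝ := fun t => (1 - r t)^2 with hzdef
      have hzc : ContinuousOn z (Icc 0 L) := (continuousOn_const.sub hrc).pow 2
      have hz0 : ∀ t, 0 ≤ z t := fun t => sq_nonneg _
      set Z : ℝ → ℝ := fun t => 2*(1 - r t) * (-(⟪g t, f t⟫ / r t)) with hZdef
      have hZc : ContinuousOn Z (Icc 0 L) := by
        apply ContinuousOn.mul
        · exact continuousOn_const.mul (continuousOn_const.sub hrc)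
        · exact ((hgc.inner hfc).div hrc (fun t _ => (hrpos t).ne')).neg
      have hzderiv : ∀ t ∈ Ioo 0 L, HasDerivAt z (Z t) t := by
        intro t ht
        have hgt := hder t ht
        have hq : HasDerivAt (fun u => ‖g u‖^2 + δ^2) (⟪g t, f t⟫ + ⟪f t, g t⟫) t := by
          have h1 : HasDerivAt (fun u => ⟪g u, g u⟫) (⟪g t, f t⟫ + ⟪f t, g t⟫) t :=
            hgt.inner ℝ hgt
          have h2 : (fun u => ‖g u‖^2 + δ^2) = fun u => ⟪g u, g u⟫ + δ^2 := by
            funext u; rw [real_inner_self_eq_norm_sq]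
          rw [h2]
          exact h1.add_const _
        have hr' : HasDerivAt r ((⟪g t, f t⟫ + ⟪f t, g t⟫) / (2 * r t)) t :=
          hq.sqrt (by positivity)
        have hz' := (hr'.const_sub 1).pow (n := 2)
        refine hz'.congr_deriv ?_
        rw [hZdef]
        simp only
        rw [real_inner_comm (f t) (g t)]
        have hrne : r t ≠ 0 := (hrpos t).ne'
        push_cast
        field_simp
        ring
      -- pointwise master inequality (scaled by ε)
      have hmaster : ∀ t ∈ Ioo 0 L,
          z t + ε * |Z t| ≤ 8*ε^2*E t + 2*δ^2*(2*|1 - ‖g t‖^2| + δ^2) := by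
        intro t ht
        have hp0 : (0:ℝ) ≤ ‖f t‖ := norm_nonneg _
        have hρ0 : (0:ℝ) ≤ ‖g t‖ := norm_nonneg _
        have hR0 : 0 < r t := hrpos t
        have hρR : ‖g t‖ ≤ r t := hrρ t
        have hRsq : (r t)^2 = ‖g t‖^2 + δ^2 := hrsq t
        have hinner : |⟪g t, f t⟫| ≤ ‖g t‖ * ‖f t‖ := abs_real_inner_le_norm _ _
        have hZbound : |Z t| ≤ 2 * |1 - r t| * ‖f t‖ := by
          rw [hZdef]
          simp only
          rw [abs_mul, abs_mul, abs_neg, abs_div, abs_of_pos hR0]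
          have h1 : |⟪g t, f t⟫| / r t ≤ ‖f t‖ := by
            rw [div_le_iff₀ hR0]
            calc |⟪g t, f t⟫| ≤ ‖g t‖ * ‖f t‖ := hinner
              _ ≤ r t * ‖f t‖ := mul_le_mul_of_nonneg_right hρR hp0
              _ = ‖f t‖ * r t := mul_comm _ _
          calc |2| * |1 - r t| * (|⟪g t, f t⟫| / r t)
              ≤ |2| * |1 - r t| * ‖f t‖ := by
                apply mul_le_mul_of_nonneg_left h1
                positivity
            _ = 2 * |1 - r t| * ‖f t‖ := by norm_num
        have hEt : 8*ε^2*E t = 4*ε^2*‖f t‖^2 + 2*(1 - ‖g t‖^2)^2 := by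
          rw [hEdef]
          simp only
          field_simp
          ring
        have hzt : z t = (1 - r t)^2 := rfl
        rw [hEt, hzt]
        have h1 : (1 - (r t)^2)^2 ≤ (1 - ‖g t‖^2)^2 + 2*δ^2*|1 - ‖g t‖^2| + δ^4 := by
          have ha := le_abs_self (1 - ‖g t‖^2)
          have hb := neg_abs_le (1 - ‖g t‖^2)
          nlinarith [sq_nonneg δ]
        have h2 : (1 - r t)^2 ≤ (1 - (r t)^2)^2 := by
          nlinarith [mul_nonneg (sq_nonneg (1 - r t))
            (by nlinarith [hR0.le, sq_nonneg (r t)] : (0:ℝ) ≤ 2*(r t) + (r t)^2)]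
        have h3 : ε * (2 * |1 - r t| * ‖f t‖) ≤ 2*ε^2*‖f t‖^2 + (1 - r t)^2 / 2 := by
          nlinarith [sq_nonneg (2*ε*‖f t‖ - |1 - r t|), sq_abs (1 - r t),
            mul_nonneg (mul_nonneg hε.le hp0) (abs_nonneg (1 - r t))]
        have h4 : ε * |Z t| ≤ ε * (2 * |1 - r t| * ‖f t‖) :=
          mul_le_mul_of_nonneg_left hZbound hε.le
        have h5 : (0:ℝ) ≤ δ^2*|1 - ‖g t‖^2| := by positivity
        have h6 : (0:ℝ) ≤ δ^4 := by positivity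
        have h7 : (0:ℝ) ≤ ε^2*‖f t‖^2 := by positivity
        have h8 : (0:ℝ) ≤ (1 - ‖g t‖^2)^2 := sq_nonneg _
        nlinarith [h1, h2, h3, h4, h5, h6, h7, h8]
      -- integrability of pieces
      have hzi : IntervalIntegrable z volume 0 L := hII hzc
      have hZa : IntervalIntegrable (fun t => |Z t|) volume 0 L := hII hZc.abs
      have hZa0 : 0 ≤ ∫ t in (0:ℝ)..L, |Z t| :=
        intervalIntegral.integral_nonneg hL0.le fun u _ => abs_nonneg _
      -- minimum point
      obtain ⟨s, hsI, hsmin⟩ := isCompact_Icc.exists_isMinOn (nonempty_Icc.2 hL0.le) hzc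
      have hzs : z s * L ≤ ∫ t in (0:ℝ)..L, z t := by
        have h1 : (∫ _t in (0:ℝ)..L, z s) ≤ ∫ t in (0:ℝ)..L, z t :=
          intervalIntegral.integral_mono_on hL0.le intervalIntegrable_const hzi
            (fun x hx => hsmin hx)
        rw [intervalIntegral.integral_const, smul_eq_mul, sub_zero] at h1
        linarith [h1]
      have hzint0 : 0 ≤ ∫ t in (0:ℝ)..L, z t :=
        intervalIntegral.integral_nonneg hL0.le fun u _ => hz0 u
      -- FTC
      have hftc : z t₀ ≤ z s + ∫ t in (0:ℝ)..L, |Z t| := by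
        have hsub : Set.uIcc s t₀ ⊆ Icc 0 L :=
          Set.uIcc_subset_Icc hsI (Ioo_subset_Icc_self ht₀)
        have hIoosub : Set.Ioo (min s t₀) (max s t₀) ⊆ Ioo 0 L := by
          intro x hx
          exact ⟨lt_of_le_of_lt (le_min hsI.1 ht₀.1.le) hx.1,
            lt_of_lt_of_le hx.2 (max_le hsI.2 ht₀.2.le)⟩
        have heq : ∫ t in s..t₀, Z t = z t₀ - z s := by
          apply intervalIntegral.integral_eq_sub_of_hasDeriv_right (hzc.mono hsub)
          · intro x hx
            exact (hzderiv x (hIoosub hx)).hasDerivWithinAt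
          · exact (hZc.mono hsub).intervalIntegrable
        have h2 : ∫ t in s..t₀, Z t ≤ ∫ t in (0:ℝ)..L, |Z t| := by
          calc ∫ t in s..t₀, Z t ≤ |∫ t in s..t₀, Z t| := le_abs_self _
            _ ≤ abs (∫ t in s..t₀, |Z t|) := by
                simpa [Real.norm_eq_abs] using
                  intervalIntegral.norm_integral_le_abs_integral_norm
                    (f := Z) (a := s) (b := t₀) (μ := volume)
            _ ≤ abs (∫ t in (0:ℝ)..L, |Z t|) := by
                apply intervalIntegral.abs_integral_mono_interval
                · rw [Set.uIoc_of_le hL0.le]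
                  rcases le_total s t₀ with hst | hst
                  · rw [Set.uIoc_of_le hst]
                    exact Ioc_subset_Ioc hsI.1 ht₀.2.le
                  · rw [Set.uIoc_of_ge hst]
                    exact Ioc_subset_Ioc ht₀.1.le hsI.2
                · filter_upwards with x using abs_nonneg _
                · exact hZa
            _ = ∫ t in (0:ℝ)..L, |Z t| := abs_of_nonneg hZa0
        linarith
      -- integrate the master inequality
      have hrhs_i : IntervalIntegrable
          (fun t => 8*ε^2*E t + 2*δ^2*(2*|1 - ‖g t‖^2| + δ^2)) volume 0 L :=
        (hEi.const_mul _).add (((hAi.const_mul 2).add intervalIntegrable_const).const_mul _)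
      have hint1 : (∫ t in (0:ℝ)..L, (z t + ε * |Z t|))
          ≤ ∫ t in (0:ℝ)..L, (8*ε^2*E t + 2*δ^2*(2*|1 - ‖g t‖^2| + δ^2)) := by
        apply intervalIntegral.integral_mono_ae_restrict hL0.le
          (hzi.add (hZa.const_mul ε)) hrhs_i
        refine (MeasureTheory.ae_restrict_iff' measurableSet_Icc).2 ?_
        filter_upwards [hne_ae 0, hne_ae L] with t ht0 htL htIcc
        exact hmaster t ⟨lt_of_le_of_ne htIcc.1 (Ne.symm ht0), lt_of_le_of_ne htIcc.2 htL⟩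
      have hsplitL : (∫ t in (0:ℝ)..L, (z t + ε * |Z t|))
          = (∫ t in (0:ℝ)..L, z t) + ε * ∫ t in (0:ℝ)..L, |Z t| := by
        rw [intervalIntegral.integral_add hzi (hZa.const_mul ε),
          intervalIntegral.integral_const_mul]
      have hsplitR : (∫ t in (0:ℝ)..L, (8*ε^2*E t + 2*δ^2*(2*|1 - ‖g t‖^2| + δ^2)))
          = 8*ε^2*(∫ t in (0:ℝ)..L, E t) + 2*δ^2*(2*A + δ^2*L) := by
        rw [intervalIntegral.integral_add (hEi.const_mul _)
            (((hAi.const_mul 2).add intervalIntegrable_const).const_mul _),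
          intervalIntegral.integral_const_mul, intervalIntegral.integral_const_mul,
          intervalIntegral.integral_add (hAi.const_mul 2) intervalIntegrable_const,
          intervalIntegral.integral_const_mul, intervalIntegral.integral_const,
          smul_eq_mul, sub_zero, ← hAdef]
        ring
      have hbound : ε * z t₀ ≤ 8*ε^2*N + 2*δ^2*(2*A + δ^2*L) := by
        have h1 : ε * z t₀ ≤ ε * z s + ε * ∫ t in (0:ℝ)..L, |Z t| := by
          have := mul_le_mul_of_nonneg_left hftc hε.le
          nlinarith [this]
        have h2 : ε * z s ≤ ∫ t in (0:ℝ)..L, z t := by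
          have h3 : ε * z s ≤ L * z s := mul_le_mul_of_nonneg_right hL (hz0 s)
          nlinarith [hzs]
        have h4 : 8*ε^2*(∫ t in (0:ℝ)..L, E t) ≤ 8*ε^2*N := by
          have : (0:ℝ) ≤ 8*ε^2 := by positivity
          nlinarith [hEN]
        calc ε * z t₀ ≤ (∫ t in (0:ℝ)..L, z t) + ε * ∫ t in (0:ℝ)..L, |Z t| := by linarith
          _ = ∫ t in (0:ℝ)..L, (z t + ε * |Z t|) := hsplitL.symm
          _ ≤ ∫ t in (0:ℝ)..L, (8*ε^2*E t + 2*δ^2*(2*|1 - ‖g t‖^2| + δ^2)) := hint1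
          _ = 8*ε^2*(∫ t in (0:ℝ)..L, E t) + 2*δ^2*(2*A + δ^2*L) := hsplitR
          _ ≤ 8*ε^2*N + 2*δ^2*(2*A + δ^2*L) := by linarith
      have hzt0 : z t₀ ≤ 8*ε*N + δ * ((2/ε) * (2*A + L)) := by
        have h3 : 2*δ^2*(2*A + δ^2*L) ≤ δ * (2*(2*A + L)) := by
          have hδ2 : δ^2 ≤ δ := by nlinarith [hδ.le, hδ1]
          have hδ4 : δ^4 ≤ δ := by nlinarith [hδ.le, hδ1, sq_nonneg δ, sq_nonneg (δ^2)]
          have p1 : δ^2*A ≤ δ*A := mul_le_mul_of_nonneg_right hδ2 hA0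
          have p2 : δ^4*L ≤ δ*L := mul_le_mul_of_nonneg_right hδ4 hL0.le
          nlinarith [p1, p2]
        have h4 : ε * z t₀ ≤ ε * (8*ε*N + δ * ((2/ε) * (2*A + L))) := by
          have hεne : ε ≠ 0 := hε.ne'
          have hexp : ε * (8*ε*N + δ * ((2/ε) * (2*A + L))) = 8*ε^2*N + δ*(2*(2*A+L)) := by
            field_simp
          rw [hexp]
          linarith [hbound, h3]
        exact le_of_mul_le_mul_left h4 hε
      have hζ : (1 - ‖g t₀‖)^2 ≤ z t₀ + 2*δ*|1 - ‖g t₀‖| + δ := by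
        have hzt : z t₀ = (1 - r t₀)^2 := rfl
        rw [hzt]
        have := stmt1_aux (‖g t₀‖) (r t₀) δ (hrρ t₀) (hrub t₀) hδ hδ1
        linarith
      have hexp2 : δ * M = δ * ((2/ε) * (2*A + L)) + 2*δ*|1 - ‖g t₀‖| + δ := by
        rw [hMdef]; ring
      rw [hexp2]
      linarith
    -- conclude from key
    apply le_of_forall_pos_le_add
    intro η hη
    have hM1 : (0:ℝ) < M + 1 := by linarith
    have hδ0 : 0 < min 1 (η/(M+1)) := lt_min one_pos (div_pos hη hM1)
    have hkey := key _ hδ0 (min_le_left _ _)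
    have hfin : min 1 (η/(M+1)) * M ≤ η := by
      have h1 : min 1 (η/(M+1)) * M ≤ (η/(M+1)) * M :=
        mul_le_mul_of_nonneg_right (min_le_right _ _) hM0
      have h2 : (η/(M+1)) * M ≤ η := by
        rw [div_mul_eq_mul_div, div_le_iff₀ hM1]
        nlinarith
      linarith
    linarith
  -- extend to the closed interval
  intro t₀ ht₀
  by_cases h : t₀ ∈ Ioo 0 L
  · exact hmain t₀ h
  · have hcl : t₀ ∈ closure (Ioo 0 L) := by
      rw [closure_Ioo hL0.ne]; exact ht₀
    have hne : (nhdsWithin t₀ (Ioo 0 L)).NeBot := mem_closure_iff_nhdsWithin_neBot.1 hcl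
    have hct : ContinuousWithinAt (fun t => (1 - ‖g t‖)^2) (Ioo 0 L) t₀ :=
      (((continuousOn_const.sub hgc.norm).pow 2) t₀ ht₀).mono Ioo_subset_Icc_self
    exact le_of_tendsto hct (eventually_mem_nhdsWithin.mono fun t ht => hmain t ht)
end

section
/- Let u : ℝ² → ℝ² satisfy the Hölder estimate |u(x) − u(y)| ≤ C(|x − y|/ε)^β for some β ∈ (0,1), C ≥ 1, and |u| ≤ 2 everywhere. Fix x₀ and let A ∈ (0,1) satisfy 4C·A^β = |1 − |u(x₀)|²|/2. Then for every y ∈ B(x₀, Aε): |1 − |u(y)|²| ≥ |1 − |u(x₀)|²|/2, and consequently ∫_{B(x₀, Aε)} (1 − |u(y)|²)² dy ≥ (π/4)·A²ε²·(1 − |u(x₀)|²)². -/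
open MeasureTheory Metric Set Real

noncomputable section

abbrev E2 := EuclideanSpace ℝ (Fin 2)

def e2 (i : Fin 2) : E2 := EuclideanSpace.single i 1

def lap (f : E2 → E2) (x : E2) : E2 :=
  ∑ i : Fin 2, fderiv ℝ (fun y => fderiv ℝ f y (e2 i)) x (e2 i)

def lapR (f : E2 → ℝ) (x : E2) : ℝ :=
  ∑ i : Fin 2, fderiv ℝ (fun y => fderiv ℝ f y (e2 i)) x (e2 i)

def gradSq (f : E2 → E2) (x : E2) : ℝ :=
  ∑ i : Fin 2, ‖fderiv ℝ f x (e2 i)‖ ^ 2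

def gradSqR (f : E2 → ℝ) (x : E2) : ℝ :=
  ∑ i : Fin 2, (fderiv ℝ f x (e2 i)) ^ 2

/-- pointwise-to-integral lower bound. -/
theorem stmt7 (ε C β A : ℝ) (hε : 0 < ε) (hC : 1 ≤ C) (hβ : β ∈ Set.Ioo (0:ℝ) 1)
    (u : E2 → E2) (hu2 : ∀ x, ‖u x‖ ≤ 2)
    (hH : ∀ x y : E2, ‖u x - u y‖ ≤ C * (‖x - y‖ / ε) ^ β)
    (x₀ : E2) (hA : A ∈ Set.Ioo (0:ℝ) 1)
    (hAdef : 4 * C * A ^ β = |1 - ‖u x₀‖ ^ 2| / 2) :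
    (∀ y ∈ Metric.ball x₀ (A * ε), |1 - ‖u x₀‖ ^ 2| / 2 ≤ |1 - ‖u y‖ ^ 2|) ∧
      (Real.pi / 4) * A ^ 2 * ε ^ 2 * (1 - ‖u x₀‖ ^ 2) ^ 2 ≤
        ∫ y in Metric.ball x₀ (A * ε), (1 - ‖u y‖ ^ 2) ^ 2 := by
  have hC0 : 0 < C := lt_of_lt_of_le one_pos hC
  have hA0 : 0 < A := hA.1
  -- Part 1: pointwise lower bound on the ball
  have h1 : ∀ y ∈ Metric.ball x₀ (A * ε), |1 - ‖u x₀‖ ^ 2| / 2 ≤ |1 - ‖u y‖ ^ 2| := by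
    intro y hy
    have hdist : ‖y - x₀‖ < A * ε := by rwa [mem_ball, dist_eq_norm] at hy
    have hkey : |‖u y‖ ^ 2 - ‖u x₀‖ ^ 2| ≤ |1 - ‖u x₀‖ ^ 2| / 2 := by
      have h2 : ‖u y - u x₀‖ ≤ C * A ^ β := by
        calc ‖u y - u x₀‖ ≤ C * (‖y - x₀‖ / ε) ^ β := hH y x₀
          _ ≤ C * A ^ β := by
              gcongr C * ?_
              exact Real.rpow_le_rpow (by positivity)
                (by rw [div_le_iff₀ hε]; linarith) hβ.1.le
      have h3 : |‖u y‖ ^ 2 - ‖u x₀‖ ^ 2| ≤ 4 * ‖u y - u x₀‖ := by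
        have habs := abs_norm_sub_norm_le (u y) (u x₀)
        have hy2 := hu2 y; have hx2 := hu2 x₀
        have hny : 0 ≤ ‖u y‖ := norm_nonneg _
        have hnx : 0 ≤ ‖u x₀‖ := norm_nonneg _
        calc |‖u y‖ ^ 2 - ‖u x₀‖ ^ 2| = |‖u y‖ - ‖u x₀‖| * (‖u y‖ + ‖u x₀‖) := by
              rw [← abs_of_nonneg (by linarith : (0:ℝ) ≤ ‖u y‖ + ‖u x₀‖), ← abs_mul]
              ring_nf
          _ ≤ ‖u y - u x₀‖ * 4 :=
              mul_le_mul habs (by linarith) (by linarith) (norm_nonneg _)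
          _ = 4 * ‖u y - u x₀‖ := by ring
      calc |‖u y‖ ^ 2 - ‖u x₀‖ ^ 2| ≤ 4 * ‖u y - u x₀‖ := h3
        _ ≤ 4 * (C * A ^ β) := by linarith
        _ = |1 - ‖u x₀‖ ^ 2| / 2 := by rw [← hAdef]; ring
    have htri : |1 - ‖u x₀‖ ^ 2| ≤ |1 - ‖u y‖ ^ 2| + |‖u y‖ ^ 2 - ‖u x₀‖ ^ 2| := by
      calc |1 - ‖u x₀‖ ^ 2| = |(1 - ‖u y‖ ^ 2) + (‖u y‖ ^ 2 - ‖u x₀‖ ^ 2)| := by ring_nf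
        _ ≤ _ := abs_add_le _ _
    linarith
  refine ⟨h1, ?_⟩
  -- u is continuous (from the Hölder bound)
  have hcont : Continuous u := by
    rw [Metric.continuous_iff]
    intro x δ hδ
    refine ⟨ε * (δ / (2 * C)) ^ β⁻¹, by positivity, fun y hy => ?_⟩
    rw [dist_eq_norm]
    calc ‖u y - u x‖ ≤ C * (‖y - x‖ / ε) ^ β := hH y x
      _ ≤ C * (δ / (2 * C)) := by
          gcongr C * ?_
          have hb : ‖y - x‖ / ε ≤ (δ / (2 * C)) ^ β⁻¹ := by
            rw [div_le_iff₀ hε, mul_comm]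
            exact le_of_lt (by rwa [dist_eq_norm] at hy)
          calc (‖y - x‖ / ε) ^ β ≤ ((δ / (2 * C)) ^ β⁻¹) ^ β :=
                Real.rpow_le_rpow (by positivity) hb hβ.1.le
            _ = δ / (2 * C) := Real.rpow_inv_rpow (by positivity) (ne_of_gt hβ.1)
      _ = δ / 2 := by field_simp
      _ < δ := by linarith
  -- Part 2: integral lower bound
  have hmeas : MeasurableSet (Metric.ball x₀ (A * ε)) := measurableSet_ball
  have hvol : volume (Metric.ball x₀ (A * ε)) ≠ ⊤ := measure_ball_lt_top.ne
  have hint : IntegrableOn (fun y => (1 - ‖u y‖ ^ 2) ^ 2) (Metric.ball x₀ (A * ε)) := by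
    have : IntegrableOn (fun y => (1 - ‖u y‖ ^ 2) ^ 2) (Metric.closedBall x₀ (A * ε)) :=
      (Continuous.pow (by continuity) 2).continuousOn.integrableOn_compact
        (isCompact_closedBall _ _)
    exact this.mono_set ball_subset_closedBall
  have hpt : ∀ y ∈ Metric.ball x₀ (A * ε),
      (1 - ‖u x₀‖ ^ 2) ^ 2 / 4 ≤ (1 - ‖u y‖ ^ 2) ^ 2 := by
    intro y hy
    have := h1 y hy
    have h4 : (|1 - ‖u x₀‖ ^ 2| / 2) ^ 2 ≤ |1 - ‖u y‖ ^ 2| ^ 2 := by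
      apply pow_le_pow_left₀ (by positivity) this
    rw [sq_abs] at h4
    calc (1 - ‖u x₀‖ ^ 2) ^ 2 / 4 = (|1 - ‖u x₀‖ ^ 2| / 2) ^ 2 := by
          rw [div_pow, sq_abs]; norm_num
      _ ≤ (1 - ‖u y‖ ^ 2) ^ 2 := h4
  have hvolr : (volume (Metric.ball x₀ (A * ε))).toReal = Real.pi * (A * ε) ^ 2 := by
    rw [EuclideanSpace.volume_ball]
    have h : Real.Gamma ((Fintype.card (Fin 2)) / 2 + 1) = 1 := by norm_num
    rw [h]
    simp [Fintype.card_fin]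
    rw [ENNReal.toReal_ofReal (by positivity : (0:ℝ) ≤ A * ε)]
    rw [Real.sq_sqrt Real.pi_pos.le]; ring
  have hmain := setIntegral_ge_of_const_le_real hmeas hvol hpt hint
  calc (Real.pi / 4) * A ^ 2 * ε ^ 2 * (1 - ‖u x₀‖ ^ 2) ^ 2
      = (1 - ‖u x₀‖ ^ 2) ^ 2 / 4 * (volume (Metric.ball x₀ (A * ε))).toReal := by
        rw [hvolr]; ring
    _ ≤ _ := hmain
end
end
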